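/- For each positive integer k, let n = 4k and let C_n be the n×n block-diagonal matrix with k diagonal blocks equal to the 2×2 identity matrix I₂ and k diagonal blocks equal to the 2×2 all-ones matrix J₂. Then inf_{γ>0} linx(C_n, n/2; γ) − inf_{γ̄>0} linx(C_n, n/2; I_n, γ̄) ≥ 0.024036·n, where I_n is the order-n identity matrix used as a mask. -/
import Mathlib


open Matrix Real Set

noncomputable section

/-- The feasible polytope `P(n,s)`. -/
def PP (n s : ℕ) : Set (Fin n → ℝ) :=
  {x | (∑ i, x i) = (s : ℝ) ∧ ∀ i, 0 ≤ x i ∧ x i ≤ 1}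

/-- The scaled linx objective `f(C,s;γ;x)`. -/
def fLinxScaled {n : ℕ} (C : Matrix (Fin n) (Fin n) ℝ) (s : ℕ) (γ : ℝ) (x : Fin n → ℝ) : ℝ :=
  (1 / 2) * (Real.log ((γ • (C * Matrix.diagonal x * C) + Matrix.diagonal fun i => 1 - x i).det)
    - (s : ℝ) * Real.log γ)

/-- The scaled linx bound `linx(C,s;γ)`. -/
def linxScaled (n s : ℕ) (C : Matrix (Fin n) (Fin n) ℝ) (γ : ℝ) : ℝ :=
  sSup (fLinxScaled C s γ '' PP n s)

/-- The masked scaled linx bound `linx(C,s;M,γ)`. -/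
def linxMaskScaled (n s : ℕ) (C M : Matrix (Fin n) (Fin n) ℝ) (γ : ℝ) : ℝ :=
  sSup (fLinxScaled (Matrix.hadamard C M) s γ '' PP n s)

open scoped Classical in
/-- Block-diagonal matrix of order `4k` with `k` diagonal blocks equal to `I₂`
(the first `k` blocks) and `k` diagonal blocks equal to `J₂` (the last `k` blocks). -/
def Cmix (k : ℕ) : Matrix (Fin (4 * k)) (Fin (4 * k)) ℝ :=
  Matrix.of fun i j =>
    if (i : ℕ) / 2 = (j : ℕ) / 2 then
      (if (i : ℕ) / 2 < k then (if i = j then 1 else 0) else 1)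
    else 0

lemma isCompact_PP (n s : ℕ) : IsCompact (PP n s) := by
  have h1 : PP n s = ((fun x : Fin n → ℝ => ∑ i, x i) ⁻¹' {(s : ℝ)}) ∩ Set.Icc 0 1 := by
    ext x
    simp only [PP, Set.mem_setOf_eq, Set.mem_inter_iff, Set.mem_preimage, Set.mem_singleton_iff,
      Set.mem_Icc, Pi.le_def]
    constructor
    · rintro ⟨h, h2⟩
      exact ⟨h, fun i => (h2 i).1, fun i => (h2 i).2⟩
    · rintro ⟨h, h2, h3⟩
      exact ⟨h, fun i => ⟨h2 i, h3 i⟩⟩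
  rw [h1]
  exact IsCompact.inter_left isCompact_Icc
    (isClosed_singleton.preimage (continuous_finset_sum _ fun i _ => continuous_apply i))

lemma bddAbove_fLinx (n s : ℕ) (C : Matrix (Fin n) (Fin n) ℝ) (γ : ℝ) :
    BddAbove (fLinxScaled C s γ '' PP n s) := by
  set g : (Fin n → ℝ) → ℝ :=
    fun x => |(γ • (C * Matrix.diagonal x * C) + Matrix.diagonal fun i => 1 - x i).det| with hg
  have hgc : Continuous g := by
    apply Continuous.abs
    apply Continuous.matrix_det
    exact Continuous.add
      (Continuous.const_smul ((continuous_const.matrix_mul (Continuous.matrix_diagonal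
        continuous_id)).matrix_mul continuous_const) γ)
      (Continuous.matrix_diagonal (by continuity))
  obtain ⟨M, hM⟩ := ((isCompact_PP n s).image hgc).bddAbove
  refine ⟨(1/2) * (Real.log (max M 1) - s * Real.log γ), ?_⟩
  rintro y ⟨x, hx, rfl⟩
  have hgx : g x ≤ max M 1 := le_trans (hM (Set.mem_image_of_mem g hx)) (le_max_left _ _)
  have hlog : Real.log ((γ • (C * Matrix.diagonal x * C)
      + Matrix.diagonal fun i => 1 - x i).det) ≤ Real.log (max M 1) := by
    rw [← Real.log_abs]
    rcases eq_or_lt_of_le (abs_nonneg ((γ • (C * Matrix.diagonal x * C)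
        + Matrix.diagonal fun i => 1 - x i).det)) with h | h
    · rw [← h, Real.log_zero]
      exact Real.log_nonneg (le_max_right _ _)
    · exact (Real.log_le_log_iff h (lt_of_lt_of_le one_pos (le_max_right _ _))).mpr hgx
  have : fLinxScaled C s γ x ≤ (1/2) * (Real.log (max M 1) - s * Real.log γ) := by
    unfold fLinxScaled
    have h2 : (0:ℝ) < 1/2 := by norm_num
    apply mul_le_mul_of_nonneg_left _ h2.le
    linarith
  exact this

def blkEquiv (k : ℕ) : Fin (4 * k) ≃ Fin 2 × Fin (2 * k) where
  toFun i := (⟨(i : ℕ) % 2, by omega⟩, ⟨(i : ℕ) / 2, by omega⟩)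
  invFun p := ⟨2 * (p.2 : ℕ) + (p.1 : ℕ), by omega⟩
  left_inv i := by ext; simp; omega
  right_inv p := by
    ext
    · simp; omega
    · simp; omega

def blkC (k : ℕ) (j : Fin (2 * k)) : Matrix (Fin 2) (Fin 2) ℝ :=
  if (j : ℕ) < k then 1 else Matrix.of fun _ _ => 1

lemma cmix_blocks (k : ℕ) :
    (Cmix k).submatrix (blkEquiv k).symm (blkEquiv k).symm
      = Matrix.blockDiagonal (blkC k) := by
  ext ⟨a, j⟩ ⟨b, j'⟩
  simp only [submatrix_apply, blockDiagonal_apply, blkEquiv, Equiv.coe_fn_symm_mk, Cmix, of_apply,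
    blkC]
  have ha : (a : ℕ) < 2 := a.2
  have hb : (b : ℕ) < 2 := b.2
  have hd1 : (2 * (j:ℕ) + (a:ℕ)) / 2 = (j:ℕ) := by omega
  have hd2 : (2 * (j':ℕ) + (b:ℕ)) / 2 = (j':ℕ) := by omega
  rw [hd1, hd2]
  by_cases hjj : j = j'
  · subst hjj
    simp only [if_pos rfl, Fin.val_eq_val]
    by_cases hk : (j:ℕ) < k
    · rw [if_pos hk, if_pos hk]
      have : ((⟨2 * (j:ℕ) + (a:ℕ), by omega⟩ : Fin (4*k)) = ⟨2 * (j:ℕ) + (b:ℕ), by omega⟩) ↔ a = b := by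
        simp only [Fin.mk.injEq, Fin.ext_iff]; omega
      rw [if_congr this rfl rfl]
      simp [Matrix.one_apply]
    · rw [if_neg hk, if_neg hk]
      rfl
  · have hj' : (j : ℕ) ≠ (j' : ℕ) := fun h => hjj (Fin.ext h)
    rw [if_neg hj', if_neg (by simpa [Fin.val_eq_val] using hjj)]

def xw (k : ℕ) : Fin (4 * k) → ℝ := fun i => if (i : ℕ) / 2 < k then 2/3 else 1/3

def blkB (k : ℕ) (γ : ℝ) (j : Fin (2 * k)) : Matrix (Fin 2) (Fin 2) ℝ :=
  γ • (blkC k j * Matrix.diagonal (fun _ => if (j:ℕ) < k then (2:ℝ)/3 else 1/3) * blkC k j)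
    + Matrix.diagonal (fun _ => 1 - (if (j:ℕ) < k then (2:ℝ)/3 else 1/3))

lemma matrix_blocks (k : ℕ) (γ : ℝ) :
    (γ • (Cmix k * Matrix.diagonal (xw k) * Cmix k)
        + Matrix.diagonal fun i => 1 - xw k i).submatrix (blkEquiv k).symm (blkEquiv k).symm
      = Matrix.blockDiagonal (blkB k γ) := by
  have hdiag : ∀ c : ℝ, ∀ d : Fin (4*k) → ℝ, (∀ i, d i = if (i:ℕ)/2 < k then (2:ℝ)/3 else 1/3) →
      True := fun _ _ _ => trivial
  rw [Matrix.submatrix_add, Matrix.submatrix_smul]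
  simp only [Pi.add_apply, Pi.smul_apply]
  rw [show (Cmix k * Matrix.diagonal (xw k) * Cmix k).submatrix (blkEquiv k).symm (blkEquiv k).symm
      = (Cmix k).submatrix (blkEquiv k).symm (blkEquiv k).symm
        * (Matrix.diagonal (xw k)).submatrix (blkEquiv k).symm (blkEquiv k).symm
        * (Cmix k).submatrix (blkEquiv k).symm (blkEquiv k).symm from by
    rw [Matrix.submatrix_mul_equiv, Matrix.submatrix_mul_equiv]]
  rw [Matrix.submatrix_diagonal _ _ (blkEquiv k).symm.injective,
      Matrix.submatrix_diagonal _ _ (blkEquiv k).symm.injective, cmix_blocks]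
  have h1 : Matrix.diagonal (xw k ∘ (blkEquiv k).symm)
      = Matrix.blockDiagonal (fun j : Fin (2*k) =>
          Matrix.diagonal (fun _ : Fin 2 => if (j:ℕ) < k then (2:ℝ)/3 else 1/3)) := by
    rw [Matrix.blockDiagonal_diagonal]
    refine congrArg Matrix.diagonal (funext fun p => ?_)
    have h : (2 * (p.2:ℕ) + (p.1:ℕ)) / 2 = (p.2:ℕ) := by have := p.1.2; omega
    simp [xw, blkEquiv, h]
  have h2 : Matrix.diagonal ((fun i => 1 - xw k i) ∘ (blkEquiv k).symm)
      = Matrix.blockDiagonal (fun j : Fin (2*k) =>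
          Matrix.diagonal (fun _ : Fin 2 => 1 - (if (j:ℕ) < k then (2:ℝ)/3 else 1/3))) := by
    rw [Matrix.blockDiagonal_diagonal]
    refine congrArg Matrix.diagonal (funext fun p => ?_)
    have h : (2 * (p.2:ℕ) + (p.1:ℕ)) / 2 = (p.2:ℕ) := by have := p.1.2; omega
    simp [xw, blkEquiv, h]
  rw [h1, h2, ← Matrix.blockDiagonal_mul, ← Matrix.blockDiagonal_mul,
    ← Matrix.blockDiagonal_smul, ← Matrix.blockDiagonal_add]
  rfl

lemma det_blkB (k : ℕ) (γ : ℝ) (j : Fin (2 * k)) :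
    (blkB k γ j).det = if (j:ℕ) < k then ((2*γ+1)/3)^2 else (8*γ+4)/9 := by
  by_cases hk : (j:ℕ) < k
  · rw [if_pos hk]
    have hC : blkC k j = 1 := if_pos hk
    rw [Matrix.det_fin_two]
    simp only [blkB, hC, Matrix.one_mul, Matrix.mul_one, if_pos hk, Matrix.add_apply,
      Matrix.smul_apply, Matrix.diagonal_apply, smul_eq_mul]
    norm_num
    ring
  · rw [if_neg hk]
    have hC : blkC k j = Matrix.of fun _ _ => (1:ℝ) := if_neg hk
    rw [Matrix.det_fin_two]
    simp only [blkB, hC, if_neg hk, Matrix.add_apply, Matrix.smul_apply, Matrix.mul_apply,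
      Matrix.diagonal_apply, Matrix.of_apply, smul_eq_mul, Fin.sum_univ_two]
    norm_num
    ring

lemma card_filter_lt (m n : ℕ) (hmn : n ≤ m) :
    (Finset.univ.filter fun j : Fin m => (j : ℕ) < n).card = n := by
  have h : (Finset.univ.filter fun j : Fin m => (j : ℕ) < n)
      = Finset.univ.map (Fin.castLEEmb hmn) := by
    ext j
    simp only [Finset.mem_filter, Finset.mem_univ, true_and, Finset.mem_map]
    constructor
    · intro hj
      exact ⟨⟨(j : ℕ), hj⟩, by ext; simp⟩
    · rintro ⟨i, rfl⟩
      simpa using i.2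
  rw [h, Finset.card_map, Finset.card_univ, Fintype.card_fin]

lemma det_full (k : ℕ) (γ : ℝ) :
    (γ • (Cmix k * Matrix.diagonal (xw k) * Cmix k)
        + Matrix.diagonal fun i => 1 - xw k i).det
      = (((2*γ+1)/3)^2)^k * ((8*γ+4)/9)^k := by
  rw [← Matrix.det_submatrix_equiv_self (blkEquiv k).symm, matrix_blocks,
    Matrix.det_blockDiagonal]
  have : ∀ j : Fin (2*k), (blkB k γ j).det
      = if (j:ℕ) < k then ((2*γ+1)/3)^2 else (8*γ+4)/9 := det_blkB k γ
  rw [Finset.prod_congr rfl fun j _ => this j, Finset.prod_ite, Finset.prod_const,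
    Finset.prod_const, card_filter_lt _ _ (by omega)]
  congr 2
  have h := Finset.card_filter_add_card_filter_not
    (s := (Finset.univ : Finset (Fin (2*k)))) (p := fun j => (j : ℕ) < k)
  rw [card_filter_lt _ _ (by omega), Finset.card_univ, Fintype.card_fin] at h
  omega

lemma xw_mem_PP (k : ℕ) : xw k ∈ PP (4 * k) (2 * k) := by
  constructor
  · have h1 : ∀ i : Fin (4 * k), xw k i = if (i : ℕ) < 2 * k then (2:ℝ)/3 else 1/3 := by
      intro i
      unfold xw
      have : (i : ℕ) / 2 < k ↔ (i : ℕ) < 2 * k := by omega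
      rw [if_congr this rfl rfl]
    rw [Finset.sum_congr rfl fun i _ => h1 i, Finset.sum_ite, Finset.sum_const,
      Finset.sum_const, card_filter_lt _ _ (by omega)]
    have h := Finset.card_filter_add_card_filter_not
      (s := (Finset.univ : Finset (Fin (4*k)))) (p := fun j => (j : ℕ) < 2 * k)
    rw [card_filter_lt _ _ (by omega), Finset.card_univ, Fintype.card_fin] at h
    have h2 : (Finset.univ.filter fun j : Fin (4*k) => ¬ (j : ℕ) < 2 * k).card = 2 * k := by
      omega
    rw [h2]
    push_cast
    ring
  · intro i
    unfold xw
    split_ifs <;> norm_num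

lemma fval (k : ℕ) (γ : ℝ) (hγ : 0 < γ) :
    (k : ℝ) / 8 ≤ fLinxScaled (Cmix k) (2 * k) γ (xw k) := by
  unfold fLinxScaled
  rw [det_full k γ]
  set P : ℝ := ((2*γ+1)/3)^2 with hPdef
  set Q : ℝ := (8*γ+4)/9 with hQdef
  have hP : (0:ℝ) < P := by rw [hPdef]; positivity
  have hQ : (0:ℝ) < Q := by rw [hQdef]; positivity
  have hlog : Real.log (P^k * Q^k) = k * Real.log P + k * Real.log Q := by
    rw [Real.log_mul (pow_ne_zero _ hP.ne') (pow_ne_zero _ hQ.ne'), Real.log_pow P k,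
      Real.log_pow Q k]
  rw [hlog]
  have key : Real.log P + Real.log Q - 2 * Real.log γ = Real.log ((P * Q) / γ^2) := by
    rw [Real.log_div (mul_pos hP hQ).ne' (pow_pos hγ 2).ne', Real.log_mul hP.ne' hQ.ne',
      Real.log_pow γ 2]
    push_cast
    ring
  have hquot : (4:ℝ)/3 ≤ (P * Q) / γ^2 := by
    rw [hPdef, hQdef, le_div_iff₀ (by positivity)]
    nlinarith [sq_nonneg (γ - 1), mul_nonneg (sq_nonneg (γ - 1)) hγ.le]
  have h43 : (1:ℝ)/4 ≤ Real.log (4/3) := by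
    have h := Real.log_le_sub_one_of_pos (show (0:ℝ) < 3/4 by norm_num)
    have h2 : Real.log (4/3 : ℝ) = - Real.log (3/4) := by
      rw [← Real.log_inv]
      norm_num
    rw [h2]
    linarith
  have hlog2 : (1:ℝ)/4 ≤ Real.log ((P * Q) / γ^2) := by
    refine le_trans h43 ?_
    exact (Real.log_le_log_iff (by norm_num) (lt_of_lt_of_le (by norm_num) hquot)).mpr hquot
  have hcast : ((2 * k : ℕ) : ℝ) = 2 * (k : ℝ) := by push_cast; ring
  rw [hcast]
  have hk0 : (0:ℝ) ≤ (k : ℝ) := Nat.cast_nonneg k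
  nlinarith [hlog2]

lemma hadamard_one (k : ℕ) : Matrix.hadamard (Cmix k) (1 : Matrix (Fin (4*k)) (Fin (4*k)) ℝ)
    = (1 : Matrix (Fin (4*k)) (Fin (4*k)) ℝ) := by
  ext i j
  rw [Matrix.hadamard_apply, Matrix.one_apply]
  by_cases hij : i = j
  · subst hij
    rw [if_pos rfl]
    have : Cmix k i i = 1 := by
      unfold Cmix
      simp only [of_apply, if_pos rfl]
      split_ifs <;> rfl
    rw [this, one_mul]
  · rw [if_neg hij, mul_zero]

lemma fmask_zero (k : ℕ) (x : Fin (4*k) → ℝ) :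
    fLinxScaled (1 : Matrix (Fin (4*k)) (Fin (4*k)) ℝ) (2 * k) 1 x = 0 := by
  unfold fLinxScaled
  rw [Matrix.one_mul, Matrix.mul_one, one_smul, Matrix.diagonal_add]
  have : (fun i => x i + (1 - x i)) = fun _ : Fin (4*k) => (1:ℝ) := by
    funext i
    ring
  rw [this, Matrix.diagonal_one, Matrix.det_one, Real.log_one]
  ring

theorem stmt_19 (k : ℕ) (hk : 0 < k) :
    0.024036 * ((4 * k : ℕ) : ℝ)
      ≤ sInf ((fun γ : ℝ => linxScaled (4 * k) (2 * k) (Cmix k) γ) '' Set.Ioi 0)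
        - sInf ((fun γ : ℝ => linxMaskScaled (4 * k) (2 * k) (Cmix k) 1 γ) '' Set.Ioi 0) := by
  set S1 := (fun γ : ℝ => linxScaled (4 * k) (2 * k) (Cmix k) γ) '' Set.Ioi 0 with hS1
  set S2 := (fun γ : ℝ => linxMaskScaled (4 * k) (2 * k) (Cmix k) 1 γ) '' Set.Ioi 0 with hS2
  have hmask : linxMaskScaled (4 * k) (2 * k) (Cmix k) 1 1 = 0 := by
    unfold linxMaskScaled
    rw [hadamard_one]
    have himg : fLinxScaled (1 : Matrix (Fin (4*k)) (Fin (4*k)) ℝ) (2 * k) 1 '' PP (4*k) (2*k)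
        = {0} := by
      apply Set.eq_singleton_iff_nonempty_unique_mem.mpr
      constructor
      · exact ⟨_, Set.mem_image_of_mem _ (xw_mem_PP k)⟩
      · rintro y ⟨x, -, rfl⟩
        exact fmask_zero k x
    rw [himg, csSup_singleton]
  have h0S2 : (0:ℝ) ∈ S2 := ⟨1, by norm_num, hmask⟩
  have hS2le : sInf S2 ≤ 0 := by
    by_cases hbd : BddBelow S2
    · exact csInf_le hbd h0S2
    · rw [Real.sInf_of_not_bddBelow hbd]
  have hS1ge : 0.024036 * ((4 * k : ℕ) : ℝ) ≤ sInf S1 := by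
    apply le_csInf ⟨_, Set.mem_image_of_mem _ (show (1:ℝ) ∈ Set.Ioi 0 by norm_num)⟩
    rintro b ⟨γ, hγ, rfl⟩
    have hγ' : (0:ℝ) < γ := hγ
    have h1 : 0.024036 * ((4 * k : ℕ) : ℝ) ≤ (k : ℝ) / 8 := by
      have hk0 : (0:ℝ) ≤ (k : ℝ) := Nat.cast_nonneg k
      push_cast
      nlinarith
    refine le_trans h1 (le_trans (fval k γ hγ') ?_)
    exact le_csSup (bddAbove_fLinx _ _ _ _) (Set.mem_image_of_mem _ (xw_mem_PP k))
  linarith
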